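/- In SSL, if χ → K_bχ is derivable, then for every agent a ≠ b, ¬S_aχ is derivable. In particular ¬S_aK_bψ, ¬S_a¬K_bψ, ¬S_aS_bψ, and ¬S_a¬S_bψ are all derivable for distinct a, b. -/

import Mathlib

/-- Formulas of the epistemic-secrecy language: atoms, ⊤, ¬, ∧, K_a, S_a
(→, ↔, ⊥ are defined by abbreviation). -/
inductive Form (A P : Type) : Type where
  | atom : P → Form A P
  | top : Form A P
  | neg : Form A P → Form A P
  | and : Form A P → Form A P → Form A P
  | K : A → Form A P → Form A P
  | S : A → Form A P → Form A P

namespace Form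
variable {A P : Type}
/-- Material implication, defined from ¬ and ∧. -/
def imp (φ ψ : Form A P) : Form A P := neg (and φ (neg ψ))
/-- Biconditional. -/
def iff (φ ψ : Form A P) : Form A P := and (imp φ ψ) (imp ψ φ)
/-- Falsum. -/
def bot : Form A P := neg top
end Form

/-- A boolean interpretation of formulas: any assignment of truth values to formulas
that respects ⊤, ¬ and ∧ (treating atoms and modal formulas as atomic). -/
def PropEval {A P : Type} (g : Form A P → Prop) : Prop :=
  g Form.top ∧ (∀ φ : Form A P, g (Form.neg φ) ↔ ¬ g φ) ∧
    (∀ φ ψ : Form A P, g (Form.and φ ψ) ↔ (g φ ∧ g ψ))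

/-- The Hilbert system SSL: all instances of propositional tautologies, the S5 axioms
(K), (T), (4), (5) for each K_a, the secrecy axioms (S1) S_aφ → K_aφ,
(S2) S_aφ → ¬K_bφ for b ≠ a, (S4) S_aφ → K_aS_aφ, with rules modus ponens,
knowledge necessitation, and replacement of provable equivalents under S_a. -/
inductive Prov {A P : Type} : Form A P → Prop
  | taut (φ : Form A P) :
      (∀ g : Form A P → Prop, PropEval g → g φ) → Prov φ
  | axK (a : A) (φ ψ : Form A P) :
      Prov ((Form.K a (φ.imp ψ)).imp ((Form.K a φ).imp (Form.K a ψ)))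
  | axT (a : A) (φ : Form A P) : Prov ((Form.K a φ).imp φ)
  | ax4 (a : A) (φ : Form A P) : Prov ((Form.K a φ).imp (Form.K a (Form.K a φ)))
  | ax5 (a : A) (φ : Form A P) :
      Prov ((Form.neg (Form.K a φ)).imp (Form.K a (Form.neg (Form.K a φ))))
  | axS1 (a : A) (φ : Form A P) : Prov ((Form.S a φ).imp (Form.K a φ))
  | axS2 {a b : A} (φ : Form A P) :
      b ≠ a → Prov ((Form.S a φ).imp (Form.neg (Form.K b φ)))
  | axS4 (a : A) (φ : Form A P) : Prov ((Form.S a φ).imp (Form.K a (Form.S a φ)))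
  | mp {φ ψ : Form A P} : Prov (φ.imp ψ) → Prov φ → Prov ψ
  | nec (a : A) {φ : Form A P} : Prov φ → Prov (Form.K a φ)
  | re (a : A) {φ ψ : Form A P} :
      Prov (φ.iff ψ) → Prov ((Form.S a φ).iff (Form.S a ψ))

/-! From `⊢ χ → K_b χ` and the factivity `⊢ S_a χ → χ` of secrets one gets
`⊢ S_a χ → K_b χ`, while (S2) gives `⊢ S_a χ → ¬K_b χ`; hence `⊢ ¬S_a χ`.
The four special cases are instances with `χ` equal to `K_b ψ`, `¬K_b ψ`, `S_b ψ`
and `¬S_b ψ`, whose `b`-locality comes from (4), (5), (S4) and negative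
introspection for secrets. -/

variable {A P : Type}

theorem PropEval.imp_iff {g : Form A P → Prop} (hg : PropEval g) (φ ψ : Form A P) :
    g (φ.imp ψ) ↔ (g φ → g ψ) := by
  obtain ⟨-, hneg, hand⟩ := hg
  simp only [Form.imp, hneg, hand]
  tauto

namespace Prov

theorem imp_trans {φ ψ χ : Form A P} (h₁ : Prov (φ.imp ψ)) (h₂ : Prov (ψ.imp χ)) :
    Prov (φ.imp χ) := by
  refine mp (mp (taut ((φ.imp ψ).imp ((ψ.imp χ).imp (φ.imp χ))) fun g hg => ?_) h₁) h₂
  simp only [hg.imp_iff]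
  tauto

theorem contrapose {φ ψ : Form A P} (h : Prov (φ.imp ψ)) :
    Prov ((Form.neg ψ).imp (Form.neg φ)) := by
  refine mp (taut ((φ.imp ψ).imp ((Form.neg ψ).imp (Form.neg φ))) fun g hg => ?_) h
  simp only [hg.imp_iff, hg.2.1]
  tauto

theorem neg_of_imp_of_imp_neg {φ ψ : Form A P} (h₁ : Prov (φ.imp ψ))
    (h₂ : Prov (φ.imp (Form.neg ψ))) : Prov (Form.neg φ) := by
  refine mp (mp (taut ((φ.imp ψ).imp ((φ.imp ψ.neg).imp φ.neg)) fun g hg => ?_) h₁) h₂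
  simp only [hg.imp_iff, hg.2.1]
  tauto

theorem K_mono (a : A) {φ ψ : Form A P} (h : Prov (φ.imp ψ)) :
    Prov ((Form.K a φ).imp (Form.K a ψ)) :=
  mp (axK a φ ψ) (nec a h)

theorem S_imp (a : A) (φ : Form A P) : Prov ((Form.S a φ).imp φ) :=
  imp_trans (axS1 a φ) (axT a φ)

/-- Negative introspection for secrets:
`¬S_b ψ → ¬K_b S_b ψ → K_b ¬K_b S_b ψ → K_b ¬S_b ψ`, the last step by (S4) under `K_b`. -/
theorem neg_S_imp_K_neg_S (b : A) (ψ : Form A P) :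
    Prov ((Form.neg (Form.S b ψ)).imp (Form.K b (Form.neg (Form.S b ψ)))) :=
  imp_trans (imp_trans (contrapose (axT b _)) (ax5 b _))
    (K_mono b (contrapose (axS4 b ψ)))

theorem neg_S_of_imp_K {a b : A} (hab : a ≠ b) {χ : Form A P}
    (hχ : Prov (χ.imp (Form.K b χ))) : Prov (Form.neg (Form.S a χ)) :=
  neg_of_imp_of_imp_neg (imp_trans (S_imp a χ) hχ) (axS2 χ hab.symm)

end Prov

/-- No foreign secrets about `b`-local facts: if `χ → K_b χ` is derivable then `¬S_a χ`
is derivable for every `a ≠ b`; in particular `¬S_a K_b ψ`, `¬S_a ¬K_b ψ`,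
`¬S_a S_b ψ`, and `¬S_a ¬S_b ψ` are all derivable for distinct `a, b`. -/
theorem ssl_no_foreign_local_secrets {A P : Type} (a b : A) (hab : a ≠ b) :
    (∀ χ : Form A P, Prov (χ.imp (Form.K b χ)) → Prov (Form.neg (Form.S a χ))) ∧
    (∀ ψ : Form A P,
      Prov (Form.neg (Form.S a (Form.K b ψ))) ∧
      Prov (Form.neg (Form.S a (Form.neg (Form.K b ψ)))) ∧
      Prov (Form.neg (Form.S a (Form.S b ψ))) ∧
      Prov (Form.neg (Form.S a (Form.neg (Form.S b ψ))))) :=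
  ⟨fun _ => Prov.neg_S_of_imp_K hab, fun ψ =>
    ⟨Prov.neg_S_of_imp_K hab (Prov.ax4 b ψ),
      Prov.neg_S_of_imp_K hab (Prov.ax5 b ψ),
      Prov.neg_S_of_imp_K hab (Prov.axS4 b ψ),
      Prov.neg_S_of_imp_K hab (Prov.neg_S_imp_K_neg_S b ψ)⟩⟩
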